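/- Let n ≥ 1, μ = (μ_1,…,μ_n) ∈ ℂⁿ and m = (m_1,…,m_n) ∈ ℤⁿ. Define η ∈ ℂ^{2n} and δ ∈ {0,1}^{2n} by η_{2l−1} = μ_l + |m_l|/2, η_{2l} = μ_l − |m_l|/2, δ_{2l−1} = 1 if m_l is even and δ_{2l−1} = 0 if m_l is odd, and δ_{2l} = 0, for 1 ≤ l ≤ n. Then for every s ∈ ℂ such that none of the numbers s − μ_l + |m_l|/2 and 1 − s + μ_l + |m_l|/2 (1 ≤ l ≤ n), nor any of the numbers (s − η_{l'} + δ_{l'})/2 and (1 − s + η_{l'} + δ_{l'})/2 (1 ≤ l' ≤ 2n), is a nonpositive integer, one has iⁿ · ∏_{l=1}^n G_{m_l}(s − μ_l) = ∏_{l'=1}^{2n} G_{δ_{l'}}(s − η_{l'}). -/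
import Mathlib


/-- The gamma factor `G_m(s) = i^{|m|} (2π)^{1-2s} Γ(s + |m|/2) / Γ(1 - s + |m|/2)`. -/
noncomputable def Gm (m : ℤ) (s : ℂ) : ℂ :=
  Complex.I ^ m.natAbs * ((2 * Real.pi : ℝ) : ℂ) ^ (1 - 2 * s) *
    Complex.Gamma (s + (m.natAbs : ℂ) / 2) / Complex.Gamma (1 - s + (m.natAbs : ℂ) / 2)

/-- The gamma factor `G_δ(s) = i^δ π^{1/2-s} Γ((s+δ)/2) / Γ((1-s+δ)/2)`, `δ ∈ {0,1}`. -/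
noncomputable def Gdelta (δ : ℕ) (s : ℂ) : ℂ :=
  Complex.I ^ δ * (Real.pi : ℂ) ^ (1 / 2 - s) *
    Complex.Gamma ((s + δ) / 2) / Complex.Gamma ((1 - s + δ) / 2)

/-- `z` is not a nonpositive integer. -/
def NotNonposInt (z : ℂ) : Prop := ∀ k : ℕ, z ≠ -(k : ℂ)

open Complex


private lemma sin_shift (q : ℂ) (j : ℕ) :
    Complex.sin (↑Real.pi * (q + j)) = (-1) ^ j * Complex.sin (↑Real.pi * q) := by
  induction j with
  | zero => simp
  | succ j ih =>
    have h : (Real.pi : ℂ) * (q + (j + 1 : ℕ)) = Real.pi * (q + j) + Real.pi := by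
      push_cast; ring
    rw [h, Complex.sin_add_pi, ih]
    ring

private lemma refl_shift (q : ℂ) (j : ℕ) :
    (-1 : ℂ) ^ j * (Complex.Gamma (q + j) * Complex.Gamma (1 - (q + j))) =
      Complex.Gamma q * Complex.Gamma (1 - q) := by
  rw [Complex.Gamma_mul_Gamma_one_sub, Complex.Gamma_mul_Gamma_one_sub, sin_shift]
  rcases neg_one_pow_eq_or ℂ j with h | h <;> rw [h] <;>
    simp [div_neg, neg_mul, one_mul]

private lemma key (m : ℤ) (w : ℂ) (δ : ℕ) (hδ : δ = if Even m then 1 else 0)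
    (hB : Complex.Gamma (1 - w + (m.natAbs : ℂ) / 2) ≠ 0)
    (hq1 : Complex.Gamma ((1 - w + (m.natAbs : ℂ) / 2 + δ) / 2) ≠ 0)
    (hq2 : Complex.Gamma ((1 - w - (m.natAbs : ℂ) / 2) / 2) ≠ 0)
    (hp2 : Complex.Gamma ((w + (m.natAbs : ℂ) / 2) / 2) ≠ 0) :
    Complex.I * Gm m w = Gdelta δ (w - (m.natAbs : ℂ) / 2) * Gdelta 0 (w + (m.natAbs : ℂ) / 2) := by
  obtain ⟨j, hj⟩ : ∃ j : ℕ, 2 * j + δ = m.natAbs + 1 := by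
    by_cases h : Even m
    · have hN : Even m.natAbs := Int.natAbs_even.mpr h
      rw [Nat.even_iff] at hN
      exact ⟨m.natAbs / 2, by simp [hδ, h]; omega⟩
    · have hN : ¬ Even m.natAbs := fun hc => h (Int.natAbs_even.mp hc)
      rw [Nat.even_iff] at hN
      exact ⟨(m.natAbs + 1) / 2, by simp [hδ, h]; omega⟩
  simp only [Gm, Gdelta]
  set a : ℂ := (m.natAbs : ℂ) / 2 with ha
  have hNa : (m.natAbs : ℂ) = 2 * a := by rw [ha]; ring
  have hjc : 2 * (j : ℂ) + (δ : ℂ) = (m.natAbs : ℂ) + 1 := by exact_mod_cast hj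
  have hsq : ((Real.sqrt Real.pi : ℝ) : ℂ) ≠ 0 :=
    Complex.ofReal_ne_zero.mpr (Real.sqrt_ne_zero'.mpr Real.pi_pos)
  -- clean up the Gdelta 0 factor and normalize arguments
  simp only [pow_zero, Nat.cast_zero, add_zero, one_mul]
  rw [show (1 - (w - a) + (δ : ℂ)) / 2 = (1 - w + a + δ) / 2 by ring,
      show (1 - (w + a)) / 2 = (1 - w - a) / 2 by ring,
      show (w - a + (δ : ℂ)) / 2 = (w - a + δ) / 2 by ring]
  rw [← mul_div_assoc, div_mul_div_comm, div_eq_div_iff hB (mul_ne_zero hq1 hq2)]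
  -- duplication formula for the two big Gammas
  have dup1 : Complex.Gamma (w + a) =
      Complex.Gamma ((w + a) / 2) * Complex.Gamma ((w + a + 1) / 2) *
        ((2 : ℂ) ^ (w + a - 1) * (((Real.sqrt Real.pi : ℝ) : ℂ))⁻¹) := by
    have h := Complex.Gamma_mul_Gamma_add_half ((w + a) / 2)
    rw [show (w + a) / 2 + 1 / 2 = (w + a + 1) / 2 by ring,
        show 2 * ((w + a) / 2) = w + a by ring] at h
    rw [h]
    have h21 : (2 : ℂ) ^ (1 - (w + a)) * (2 : ℂ) ^ (w + a - 1) = 1 := by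
      rw [← Complex.cpow_add _ _ two_ne_zero, show (1 - (w + a)) + (w + a - 1) = 0 by ring,
        Complex.cpow_zero]
    have hss : ((Real.sqrt Real.pi : ℝ) : ℂ) * (((Real.sqrt Real.pi : ℝ) : ℂ))⁻¹ = 1 :=
      mul_inv_cancel₀ hsq
    linear_combination (-(Complex.Gamma (w + a)) * ((Real.sqrt Real.pi : ℝ) : ℂ) *
        (((Real.sqrt Real.pi : ℝ) : ℂ))⁻¹) * h21 - Complex.Gamma (w + a) * hss
  have dup2 : Complex.Gamma (1 - w + a) =
      Complex.Gamma ((1 - w + a) / 2) * Complex.Gamma ((2 - w + a) / 2) *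
        ((2 : ℂ) ^ (a - w) * (((Real.sqrt Real.pi : ℝ) : ℂ))⁻¹) := by
    have h := Complex.Gamma_mul_Gamma_add_half ((1 - w + a) / 2)
    rw [show (1 - w + a) / 2 + 1 / 2 = (2 - w + a) / 2 by ring,
        show 2 * ((1 - w + a) / 2) = 1 - w + a by ring] at h
    rw [h]
    have h21 : (2 : ℂ) ^ (1 - (1 - w + a)) * (2 : ℂ) ^ (a - w) = 1 := by
      rw [← Complex.cpow_add _ _ two_ne_zero, show (1 - (1 - w + a)) + (a - w) = 0 by ring,
        Complex.cpow_zero]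
    have hss : ((Real.sqrt Real.pi : ℝ) : ℂ) * (((Real.sqrt Real.pi : ℝ) : ℂ))⁻¹ = 1 :=
      mul_inv_cancel₀ hsq
    linear_combination (-(Complex.Gamma (1 - w + a)) * ((Real.sqrt Real.pi : ℝ) : ℂ) *
        (((Real.sqrt Real.pi : ℝ) : ℂ))⁻¹) * h21 - Complex.Gamma (1 - w + a) * hss
  rw [dup1, dup2]
  -- power bookkeeping
  have hIpow : Complex.I * Complex.I ^ m.natAbs * (-1 : ℂ) ^ j = Complex.I ^ δ := by
    have h1 : Complex.I * Complex.I ^ m.natAbs = Complex.I ^ (m.natAbs + 1) := by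
      rw [pow_succ, mul_comm]
    rw [h1, show m.natAbs + 1 = 2 * j + δ from hj.symm, pow_add, pow_mul, Complex.I_sq]
    have hee : ((-1 : ℂ) ^ j) * ((-1 : ℂ) ^ j) = 1 := by
      rw [← mul_pow]; norm_num
    linear_combination (Complex.I ^ δ) * hee
  have hScal : ((2 * Real.pi : ℝ) : ℂ) ^ (1 - 2 * w) * (2 : ℂ) ^ (w + a - 1) =
      (Real.pi : ℂ) ^ (1 / 2 - (w - a)) * (Real.pi : ℂ) ^ (1 / 2 - (w + a)) *
        (2 : ℂ) ^ (a - w) := by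
    have hπ : (Real.pi : ℂ) ≠ 0 := Complex.ofReal_ne_zero.mpr Real.pi_ne_zero
    rw [Complex.ofReal_mul, Complex.mul_cpow_ofReal_nonneg (by norm_num) Real.pi_pos.le]
    have h2 : ((2 : ℝ) : ℂ) ^ (1 - 2 * w) * (2 : ℂ) ^ (w + a - 1) = (2 : ℂ) ^ (a - w) := by
      norm_num
      rw [← Complex.cpow_add _ _ two_ne_zero, show (1 - 2 * w) + (w + a - 1) = a - w by ring]
    have hππ : (Real.pi : ℂ) ^ (1 / 2 - (w - a)) * (Real.pi : ℂ) ^ (1 / 2 - (w + a)) =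
        (Real.pi : ℂ) ^ (1 - 2 * w) := by
      rw [← Complex.cpow_add _ _ hπ, show (1 / 2 - (w - a)) + (1 / 2 - (w + a)) = 1 - 2 * w by ring]
    linear_combination ((Real.pi : ℂ) ^ (1 - 2 * w)) * h2 - ((2 : ℂ) ^ (a - w)) * hππ
  -- the Gamma reflection identity
  have hGam : (-1 : ℂ) ^ j *
      (Complex.Gamma ((w + a + 1) / 2) * Complex.Gamma ((1 - w - a) / 2)) =
      Complex.Gamma ((w - a + δ) / 2) * Complex.Gamma ((2 - w + a - δ) / 2) := by
    have h := refl_shift ((w - a + δ) / 2) j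
    rw [show (1 : ℂ) - ((w - a + δ) / 2 + (j : ℂ)) = (1 - w - a) / 2 by
          linear_combination (-hjc - hNa) / 2,
        show (w - a + (δ : ℂ)) / 2 + (j : ℂ) = (w + a + 1) / 2 by
          linear_combination (hjc + hNa) / 2,
        show (1 : ℂ) - (w - a + δ) / 2 = (2 - w + a - δ) / 2 by ring] at h
    exact h
  have hY : Complex.Gamma ((1 - w + a) / 2) * Complex.Gamma ((2 - w + a) / 2) =
      Complex.Gamma ((1 - w + a + δ) / 2) * Complex.Gamma ((2 - w + a - δ) / 2) := by
    have hδ01 : δ = 0 ∨ δ = 1 := by rw [hδ]; by_cases h : Even m <;> simp [h]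
    rcases hδ01 with h | h <;> subst h
    · norm_num
    · rw [show (1 - w + a + ((1 : ℕ) : ℂ)) / 2 = (2 - w + a) / 2 by push_cast; ring,
          show (2 - w + a - ((1 : ℕ) : ℂ)) / 2 = (1 - w + a) / 2 by push_cast; ring,
          mul_comm]
  have hee : ((-1 : ℂ) ^ j) * ((-1 : ℂ) ^ j) = 1 := by rw [← mul_pow]; norm_num
  have main : (Complex.I * Complex.I ^ m.natAbs * (-1 : ℂ) ^ j) *
      (((2 * Real.pi : ℝ) : ℂ) ^ (1 - 2 * w) * (2 : ℂ) ^ (w + a - 1)) *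
      ((-1 : ℂ) ^ j *
        (Complex.Gamma ((w + a + 1) / 2) * Complex.Gamma ((1 - w - a) / 2))) *
      ((((Real.sqrt Real.pi : ℝ) : ℂ))⁻¹ * Complex.Gamma ((w + a) / 2) *
        Complex.Gamma ((1 - w + a + δ) / 2)) =
      Complex.I ^ δ *
      ((Real.pi : ℂ) ^ (1 / 2 - (w - a)) * (Real.pi : ℂ) ^ (1 / 2 - (w + a)) *
        (2 : ℂ) ^ (a - w)) *
      (Complex.Gamma ((w - a + δ) / 2) * Complex.Gamma ((2 - w + a - δ) / 2)) *
      ((((Real.sqrt Real.pi : ℝ) : ℂ))⁻¹ * Complex.Gamma ((w + a) / 2) *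
        Complex.Gamma ((1 - w + a + δ) / 2)) := by
    rw [hIpow, hScal, hGam]
  linear_combination main -
    (Complex.I * Complex.I ^ m.natAbs * ((2 * Real.pi : ℝ) : ℂ) ^ (1 - 2 * w) *
      Complex.Gamma ((w + a) / 2) * Complex.Gamma ((w + a + 1) / 2) *
      (2 : ℂ) ^ (w + a - 1) * (((Real.sqrt Real.pi : ℝ) : ℂ))⁻¹ *
      Complex.Gamma ((1 - w + a + δ) / 2) * Complex.Gamma ((1 - w - a) / 2)) * hee -
    (Complex.I ^ δ * (Real.pi : ℂ) ^ (1 / 2 - (w - a)) * (Real.pi : ℂ) ^ (1 / 2 - (w + a)) *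
      (2 : ℂ) ^ (a - w) * (((Real.sqrt Real.pi : ℝ) : ℂ))⁻¹ *
      Complex.Gamma ((w + a) / 2) * Complex.Gamma ((w - a + δ) / 2)) * hY

/-- Each rank-`n` gamma factor over `ℂ` is a rank-`2n` gamma factor over `ℝ`:
`iⁿ ∏_l G_{m_l}(s - μ_l) = ∏_{l'} G_{δ_{l'}}(s - η_{l'})`, with the product on the
right grouped as `∏_l G_{δ_{2l-1}}(s - η_{2l-1}) · G_{δ_{2l}}(s - η_{2l})`. -/
theorem stmt_7 (n : ℕ) (hn : 1 ≤ n) (μ : Fin n → ℂ) (m : Fin n → ℤ)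
    (η₁ η₂ : Fin n → ℂ) (δ₁ δ₂ : Fin n → ℕ)
    (hη₁ : ∀ l, η₁ l = μ l + ((m l).natAbs : ℂ) / 2)
    (hη₂ : ∀ l, η₂ l = μ l - ((m l).natAbs : ℂ) / 2)
    (hδ₁ : ∀ l, δ₁ l = if Even (m l) then 1 else 0)
    (hδ₂ : ∀ l, δ₂ l = 0)
    (s : ℂ)
    (h1 : ∀ l, NotNonposInt (s - μ l + ((m l).natAbs : ℂ) / 2))
    (h2 : ∀ l, NotNonposInt (1 - s + μ l + ((m l).natAbs : ℂ) / 2))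
    (h3 : ∀ l, NotNonposInt ((s - η₁ l + δ₁ l) / 2) ∧
      NotNonposInt ((1 - s + η₁ l + δ₁ l) / 2) ∧
      NotNonposInt ((s - η₂ l + δ₂ l) / 2) ∧
      NotNonposInt ((1 - s + η₂ l + δ₂ l) / 2)) :
    Complex.I ^ n * ∏ l, Gm (m l) (s - μ l) =
      ∏ l, Gdelta (δ₁ l) (s - η₁ l) * Gdelta (δ₂ l) (s - η₂ l) := by
  have hstep : Complex.I ^ n * ∏ l, Gm (m l) (s - μ l) =
      ∏ l, Complex.I * Gm (m l) (s - μ l) := by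
    rw [Finset.prod_mul_distrib, Finset.prod_const]
    simp
  rw [hstep]
  apply Finset.prod_congr rfl
  intro l _
  rw [hη₁ l, hη₂ l, hδ₂ l,
      show s - (μ l + ((m l).natAbs : ℂ) / 2) = (s - μ l) - ((m l).natAbs : ℂ) / 2 by ring,
      show s - (μ l - ((m l).natAbs : ℂ) / 2) = (s - μ l) + ((m l).natAbs : ℂ) / 2 by ring]
  refine key (m l) (s - μ l) (δ₁ l) (hδ₁ l) ?_ ?_ ?_ ?_
  · refine Complex.Gamma_ne_zero fun k hc => h2 l k ?_
    linear_combination hc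
  · refine Complex.Gamma_ne_zero fun k hc => (h3 l).2.1 k ?_
    rw [hη₁ l]
    linear_combination hc
  · refine Complex.Gamma_ne_zero fun k hc => (h3 l).2.2.2 k ?_
    rw [hη₂ l, hδ₂ l]
    push_cast
    linear_combination hc
  · refine Complex.Gamma_ne_zero fun k hc => (h3 l).2.2.1 k ?_
    rw [hη₂ l, hδ₂ l]
    push_cast
    linear_combination hc
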